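/- arXiv:1707.09912 — 2 statements merged into one kernel-verified Lean document; each statement's English description precedes it below -/
import Mathlib

section
/- Let M be a subset of a real normed space X and S, T : X → X self-mappings such that u ∈ Fix(S) ∩ Fix(T) for some u ∈ X and T(∂M ∩ M) ⊆ M. Assume S(P_M(u)) = P_M(u), P_M(u) is closed and q-starshaped with q ∈ Fix(S), the pair (S,T) is a generalized JH-suboperator pair with order n₀ on P_M(u), and for all x, y ∈ P_M(u) ∪ {u}: if y = u then ψ(∫₀^{‖Tx−Ty‖} φ(t)dt) ≤ F(ψ(∫₀^{‖Sx−Sy‖} φ(t)dt), φᵤ(∫₀^{‖Sx−Sy‖} φ(t)dt)), and if y ∈ P_M(u) then for each k ∈ (0,1), ψ(∫₀^{‖Tx−Ty‖} φ(t)dt) ≤ F(ψ(∫₀^{(1/k)γ(m₃(x,y))} φ(t)dt), φᵤ(∫₀^{(1/k)γ(m₃(x,y))} φ(t)dt)), where ψ is an altering distance function, φᵤ is an ultra altering distance function, F is a C-class function, and the triple (ψ, φᵤ, F) is monotone. If P_M(u) is bounded and complete, T is hemicompact, and S is continuous, then P_M(u) ∩ Fix(S) ∩ Fix(T) ≠ ∅.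 -/
open MeasureTheory Filter Topology Set

noncomputable section

/-- The integral `∫₀^a φ(t) dt`. -/
def intPhi (phi : ℝ → ℝ) (a : ℝ) : ℝ := ∫ t in (0:ℝ)..a, phi t

/-- `φ : [0,∞) → [0,∞)` is Lebesgue integrable, summable, nonnegative, with
`∫₀^ε φ(t)dt > 0` for all `ε > 0`. -/
def PhiAdmissible (phi : ℝ → ℝ) : Prop :=
  (∀ t ≥ (0:ℝ), 0 ≤ phi t) ∧ (∀ b : ℝ, IntervalIntegrable phi volume 0 b) ∧
  ∀ ε > (0:ℝ), 0 < intPhi phi ε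

/-- Altering distance function: nondecreasing, continuous, `ψ t = 0 ↔ t = 0` on `[0,∞)`. -/
def AlteringDistance (ψ : ℝ → ℝ) : Prop :=
  MonotoneOn ψ (Ici 0) ∧ ContinuousOn ψ (Ici 0) ∧ ∀ t ≥ (0:ℝ), (ψ t = 0 ↔ t = 0)

/-- Ultra altering distance function: continuous, nondecreasing, positive on `(0,∞)`,
nonnegative at `0`. -/
def UltraAltering (φu : ℝ → ℝ) : Prop :=
  ContinuousOn φu (Ici 0) ∧ MonotoneOn φu (Ici 0) ∧ (∀ t > (0:ℝ), 0 < φu t) ∧ 0 ≤ φu 0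

/-- C-class function: continuous on `[0,∞)²`, `F s t ≤ s`, and `F s t = s → s = 0 ∨ t = 0`. -/
def CClassFun (F : ℝ → ℝ → ℝ) : Prop :=
  ContinuousOn (Function.uncurry F) (Ici 0 ×ˢ Ici 0) ∧
  (∀ s ≥ (0:ℝ), ∀ t ≥ (0:ℝ), F s t ≤ s) ∧
  (∀ s ≥ (0:ℝ), ∀ t ≥ (0:ℝ), F s t = s → s = 0 ∨ t = 0)

/-- The triple `(ψ, φᵤ, F)` is monotone. -/
def MonotoneTriple (ψ φu : ℝ → ℝ) (F : ℝ → ℝ → ℝ) : Prop :=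
  ∀ x y : ℝ, 0 ≤ x → x ≤ y → F (ψ x) (φu x) ≤ F (ψ y) (φu y)

/-- The triple `(ψ, φᵤ, F)` is strictly monotone. -/
def StrictMonotoneTriple (ψ φu : ℝ → ℝ) (F : ℝ → ℝ → ℝ) : Prop :=
  ∀ x y : ℝ, 0 ≤ x → x < y → F (ψ x) (φu x) < F (ψ y) (φu y)

/-- `γ : (0,∞) → (0,∞)` is nondecreasing with `γ t < t` for all `t > 0`. -/
def GammaAdmissible (γ : ℝ → ℝ) : Prop :=
  (∀ t > (0:ℝ), 0 < γ t) ∧ MonotoneOn γ (Ioi 0) ∧ ∀ t > (0:ℝ), γ t < t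

variable {X : Type*} [NormedAddCommGroup X] [NormedSpace ℝ X]

/-- Fixed points of `T` lying in `M`. -/
def FixOn (T : X → X) (M : Set X) : Set X := {x ∈ M | T x = x}

/-- Points of coincidence `PC(S,T)` of the pair `(S,T)` over the set `M`. -/
def PCset (S T : X → X) (M : Set X) : Set X := {w | ∃ x ∈ M, S x = w ∧ T x = w}

/-- `(S,T)` is a generalized JH-operator pair with order `n` on `M`:
there is `x ∈ M` and `w = Sx = Tx ∈ PC(S,T)` with `‖w - x‖ ≤ (δ(PC(S,T)))ⁿ`. -/
def GenJHOp (S T : X → X) (M : Set X) (n : ℕ) : Prop :=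
  ∃ x ∈ M, S x = T x ∧ ‖S x - x‖ ≤ Metric.diam (PCset S T M) ^ n

/-- `(S,T)` is a generalized JH-suboperator pair with order `n` on `M` (w.r.t. `q`):
for each `k ∈ [0,1]`, `(S, T_k)` with `T_k x = (1-k)q + kTx` is a generalized JH-operator
pair with order `n`. -/
def GenJHSubOp (S T : X → X) (M : Set X) (q : X) (n : ℕ) : Prop :=
  ∀ k ∈ Icc (0:ℝ) 1, GenJHOp S (fun x => (1 - k) • q + k • T x) M n

/-- `M` is `q`-starshaped. -/
def Starshaped (M : Set X) (q : X) : Prop :=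
  q ∈ M ∧ ∀ x ∈ M, segment ℝ q x ⊆ M

def m1 (S T : X → X) (x y : X) : ℝ :=
  max (max ‖S x - S y‖ ‖S x - T x‖)
    (max ‖S y - T y‖ ((‖T x - T y‖ + ‖S y - T x‖) / 2))

def n1 (S T : X → X) (x y : X) : ℝ :=
  max ‖S x - S y‖ (max ‖T x - S x‖ ‖S y - T y‖)

def m2 (S T : X → X) (x y : X) : ℝ :=
  max (max ‖S x - S y‖ ‖S x - T x‖)
    (max ‖S y - T y‖ ((‖S x - T y‖ + ‖S y - T x‖) / 2))

def m3 (S T : X → X) (q x y : X) : ℝ :=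
  max (max ‖S x - S y‖ (Metric.infDist (S x) (segment ℝ q (T x))))
    (max (Metric.infDist (S y) (segment ℝ q (T y)))
      ((Metric.infDist (S x) (segment ℝ q (T y)) +
        Metric.infDist (S y) (segment ℝ q (T x))) / 2))

/-- `Y^{a} = {f_a(k) : k ∈ [0,1]}` for a family `f`. -/
def Yfam (f : X → ℝ → X) (a : X) : Set X := f a '' Icc (0:ℝ) 1

def m4 (f : X → ℝ → X) (S T : X → X) (x y : X) : ℝ :=
  max (max ‖S x - S y‖ (Metric.infDist (S x) (Yfam f (T x))))
    (max (Metric.infDist (S y) (Yfam f (T y)))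
      ((Metric.infDist (S x) (Yfam f (T y)) +
        Metric.infDist (S y) (Yfam f (T x))) / 2))

/-- `ℑ = {f_α}_{α ∈ M}` is a family of functions `[0,1] → M` with `f_α(1) = α`. -/
def FamilyOn (f : X → ℝ → X) (M : Set X) : Prop :=
  (∀ a ∈ M, ∀ t ∈ Icc (0:ℝ) 1, f a t ∈ M) ∧ ∀ a ∈ M, f a 1 = a

/-- The family is contractive with contractiveness function `Φ : (0,1) → (0,1)`. -/
def ContractiveFamily (f : X → ℝ → X) (M : Set X) (Phi : ℝ → ℝ) : Prop :=
  (∀ t ∈ Ioo (0:ℝ) 1, Phi t ∈ Ioo (0:ℝ) 1) ∧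
  ∀ a ∈ M, ∀ b ∈ M, ∀ t ∈ Ioo (0:ℝ) 1, ‖f a t - f b t‖ ≤ Phi t * ‖a - b‖

/-- The family is jointly continuous: `tₙ → t₀` and `αₙ → α₀` imply
`f_{αₙ}(tₙ) → f_{α₀}(t₀)`. -/
def JointlyContinuousFamily (f : X → ℝ → X) (M : Set X) : Prop :=
  ∀ (tn : ℕ → ℝ) (t0 : ℝ), (∀ n, tn n ∈ Icc (0:ℝ) 1) → t0 ∈ Icc (0:ℝ) 1 →
    Tendsto tn atTop (𝓝 t0) →
    ∀ (an : ℕ → X) (a0 : X), (∀ n, an n ∈ M) → a0 ∈ M →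
      Tendsto an atTop (𝓝 a0) →
      Tendsto (fun n => f (an n) (tn n)) atTop (𝓝 (f a0 t0))

/-- `(S,T)` is a generalized JHℑ-suboperator pair with order `n` on `M`:
for each `k ∈ [0,1]`, `(S, T_k)` with `T_k x = f_{Tx}(k)` is a generalized
JH-operator pair with order `n`. -/
def GenJHImSubOp (f : X → ℝ → X) (S T : X → X) (M : Set X) (n : ℕ) : Prop :=
  ∀ k ∈ Icc (0:ℝ) 1, GenJHOp S (fun x => f (T x) k) M n

/-- Weak convergence of a sequence. -/
def WeakTendsTo (x : ℕ → X) (a : X) : Prop :=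
  ∀ f : StrongDual ℝ X, Tendsto (fun n => f (x n)) atTop (𝓝 (f a))

/-- Weak (sequential) closure. -/
def WSeqCl (A : Set X) : Set X := {a | ∃ x : ℕ → X, (∀ n, x n ∈ A) ∧ WeakTendsTo x a}

/-- Weak (sequential) compactness. -/
def WSeqCompact (A : Set X) : Prop :=
  ∀ x : ℕ → X, (∀ n, x n ∈ A) →
    ∃ a ∈ A, ∃ g : ℕ → ℕ, StrictMono g ∧ WeakTendsTo (x ∘ g) a

/-- `T` is completely continuous on `M`: weak convergence implies strong
convergence of images. -/
def CompletelyContinuousOn (T : X → X) (M : Set X) : Prop :=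
  ∀ (x : ℕ → X) (a : X), (∀ n, x n ∈ M) → a ∈ M → WeakTendsTo x a →
    Tendsto (fun n => T (x n)) atTop (𝓝 (T a))

/-- `S` is weakly continuous on `M`. -/
def WeaklyContinuousOn (S : X → X) (M : Set X) : Prop :=
  ∀ (x : ℕ → X) (a : X), (∀ n, x n ∈ M) → a ∈ M → WeakTendsTo x a →
    WeakTendsTo (fun n => S (x n)) (S a)

/-- `G` is demiclosed at `0` on `M`. -/
def DemiclosedAtZero (G : X → X) (M : Set X) : Prop :=
  ∀ (x : ℕ → X) (a : X), (∀ n, x n ∈ M) → a ∈ M → WeakTendsTo x a →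
    Tendsto (fun n => G (x n)) atTop (𝓝 (0 : X)) → G a = 0

/-- `T` is hemicompact on `M`. -/
def Hemicompact (T : X → X) (M : Set X) : Prop :=
  ∀ x : ℕ → X, (∀ n, x n ∈ M) →
    Tendsto (fun n => ‖x n - T (x n)‖) atTop (𝓝 (0 : ℝ)) →
    ∃ (a : X) (g : ℕ → ℕ), StrictMono g ∧ Tendsto (x ∘ g) atTop (𝓝 a)

/-- Opial's condition. -/
def OpialCondition (Y : Type*) [NormedAddCommGroup Y] [NormedSpace ℝ Y] : Prop :=
  ∀ (x : ℕ → Y) (a : Y), WeakTendsTo x a → ∀ y : Y, y ≠ a →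
    liminf (fun n => ‖x n - a‖) atTop < liminf (fun n => ‖x n - y‖) atTop

/-- `P_M(u)`, the set of best approximations to `u` out of `M`. -/
def PMset (M : Set X) (u : X) : Set X := {x ∈ M | ‖x - u‖ = Metric.infDist u M}

/-- `C_M^S(u) = {x ∈ M : Sx ∈ P_M(u)}`. -/
def CMSset (M : Set X) (S : X → X) (u : X) : Set X := {x ∈ M | S x ∈ PMset M u}


/-! For each `k ∈ (0,1)` the contraction makes the coincidence points of `S` and
`T_k x = (1-k)q + kTx` unique, so the JH-condition forces a common fixed point `xₖ` of `S`
and `T_k`. Since `k(xₖ - Txₖ) = (1-k)(q - xₖ)` and `P_M(u)` is bounded, `‖xₖ - Txₖ‖ → 0`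
as `k → 1`; hemicompactness gives a limit point `a`, fixed by `S` by continuity. If
`Ta ≠ a`, comparing `Txₖ` with `Ta` for `xₖ` close to `a` contradicts the contraction at a
suitable `k`, because `γ(t) < t`. -/

section Contraction

variable {phi ψ φu : ℝ → ℝ} {F : ℝ → ℝ → ℝ}

lemma intPhi_nonneg (hphi : PhiAdmissible phi) {a : ℝ} (ha : 0 ≤ a) : 0 ≤ intPhi phi a :=
  intervalIntegral.integral_nonneg ha fun t ht => hphi.1 t ht.1

lemma intPhi_mono (hphi : PhiAdmissible phi) {a b : ℝ} (ha : 0 ≤ a) (hab : a ≤ b) :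
    intPhi phi a ≤ intPhi phi b := by
  have hsplit := intervalIntegral.integral_add_adjacent_intervals (hphi.2.1 a)
    ((hphi.2.1 a).symm.trans (hphi.2.1 b))
  have hnonneg : 0 ≤ ∫ t in a..b, phi t :=
    intervalIntegral.integral_nonneg hab fun t ht => hphi.1 t (ha.trans ht.1)
  unfold intPhi
  linarith

lemma AlteringDistance.pos (hψ : AlteringDistance ψ) {t : ℝ} (ht : 0 < t) : 0 < ψ t := by
  have hψ0 : ψ 0 = 0 := (hψ.2.2 0 le_rfl).2 rfl
  have hle : ψ 0 ≤ ψ t := hψ.1 (mem_Ici.2 le_rfl) (mem_Ici.2 ht.le) ht.le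
  exact lt_of_le_of_ne (hψ0 ▸ hle) fun h => ht.ne' ((hψ.2.2 t ht.le).1 h.symm)

lemma CClassFun.lt_left (hF : CClassFun F) {s t : ℝ} (hs : 0 < s) (ht : 0 < t) : F s t < s :=
  (hF.2.1 s hs.le t ht.le).lt_of_ne fun h =>
    (hF.2.2 s hs.le t ht.le h).elim hs.ne' ht.ne'

lemma lt_of_le_cclass (hphi : PhiAdmissible phi) (hψ : AlteringDistance ψ)
    (hφu : UltraAltering φu) (hF : CClassFun F) {β t : ℝ} (hβ : 0 < β)
    (h : ψ (intPhi phi t) ≤ F (ψ (intPhi phi β)) (φu (intPhi phi β))) : t < β := by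
  by_contra! hβt
  have hI : 0 < intPhi phi β := hphi.2.2 β hβ
  have hlt := hF.lt_left (hψ.pos hI) (hφu.2.2.1 _ hI)
  have hmono : ψ (intPhi phi β) ≤ ψ (intPhi phi t) :=
    hψ.1 (mem_Ici.2 hI.le) (mem_Ici.2 (intPhi_nonneg hphi (hβ.le.trans hβt)))
      (intPhi_mono hphi hβ.le hβt)
  linarith

end Contraction

section SegmentGeometry

lemma mem_segment_of_eq_combo {q x y : X} {k : ℝ} (hk : k ∈ Icc (0:ℝ) 1)
    (h : (1 - k) • q + k • y = x) : x ∈ segment ℝ q y :=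
  ⟨1 - k, k, by linarith [hk.2], hk.1, by ring, h⟩

lemma norm_sub_eq_of_eq_combo {q x y : X} {k : ℝ} (hk : k ∈ Icc (0:ℝ) 1)
    (h : (1 - k) • q + k • y = x) : k * ‖x - y‖ = (1 - k) * ‖q - x‖ := by
  have hsmul : k • (x - y) = (1 - k) • (q - x) := by rw [← h]; module
  have := congrArg norm hsmul
  rwa [norm_smul, norm_smul, Real.norm_of_nonneg hk.1,
    Real.norm_of_nonneg (by linarith [hk.2])] at this

variable {S T : X → X} {q x y : X}

lemma norm_sub_le_m3 : ‖S x - S y‖ ≤ m3 S T q x y :=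
  (le_max_left _ _).trans (le_max_left _ _)

lemma m3_le_of_mem_segment (hx : S x ∈ segment ℝ q (T x)) (hy : S y ∈ segment ℝ q (T y)) :
    m3 S T q x y ≤ ‖S x - S y‖ := by
  have h₁ := Metric.infDist_le_infDist_add_dist (s := segment ℝ q (T y)) (x := S x) (y := S y)
  have h₂ := Metric.infDist_le_infDist_add_dist (s := segment ℝ q (T x)) (x := S y) (y := S x)
  rw [dist_eq_norm] at h₁ h₂
  rw [Metric.infDist_zero_of_mem hy] at h₁
  rw [Metric.infDist_zero_of_mem hx, norm_sub_rev] at h₂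
  unfold m3
  rw [Metric.infDist_zero_of_mem hx, Metric.infDist_zero_of_mem hy]
  have := norm_nonneg (S x - S y)
  refine max_le (max_le le_rfl ?_) (max_le ?_ ?_) <;> linarith

lemma m3_le_of_mem_segment_left (hx : S x ∈ segment ℝ q (T x)) {D : ℝ}
    (hy : Metric.infDist (S y) (segment ℝ q (T y)) ≤ D) (hxy : 2 * ‖S x - S y‖ ≤ D) :
    m3 S T q x y ≤ D := by
  have h₁ := Metric.infDist_le_infDist_add_dist (s := segment ℝ q (T y)) (x := S x) (y := S y)
  have h₂ := Metric.infDist_le_infDist_add_dist (s := segment ℝ q (T x)) (x := S y) (y := S x)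
  rw [dist_eq_norm] at h₁ h₂
  rw [Metric.infDist_zero_of_mem hx, norm_sub_rev] at h₂
  unfold m3
  rw [Metric.infDist_zero_of_mem hx]
  have := norm_nonneg (S x - S y)
  refine max_le (max_le ?_ ?_) (max_le hy ?_) <;> linarith

end SegmentGeometry

lemma GenJHOp.exists_fixedPoint_of_subsingleton {E : Type*} [NormedAddCommGroup E]
    {S T : E → E} {P : Set E} {n : ℕ}
    (h : GenJHOp S T P n) (hn : n ≠ 0) (hPC : (PCset S T P).Subsingleton) :
    ∃ x ∈ P, S x = x ∧ T x = x := by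
  obtain ⟨x, hx, hST, hle⟩ := h
  rw [Metric.diam_subsingleton hPC, zero_pow hn, norm_le_zero_iff, sub_eq_zero] at hle
  exact ⟨x, hx, hle, hST ▸ hle⟩

section CommonFixedPoint

variable {phi ψ φu γ : ℝ → ℝ} {F : ℝ → ℝ → ℝ} {S T : X → X} {P : Set X} {q : X}

lemma subsingleton_pcset_of_contraction (hphi : PhiAdmissible phi) (hψ : AlteringDistance ψ)
    (hφu : UltraAltering φu) (hF : CClassFun F) (hγ : GammaAdmissible γ) {k : ℝ}
    (hk : k ∈ Ioo (0:ℝ) 1)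
    (hcontr : ∀ x ∈ P, ∀ y ∈ P, ψ (intPhi phi ‖T x - T y‖) ≤
      F (ψ (intPhi phi ((1 / k) * γ (m3 S T q x y))))
        (φu (intPhi phi ((1 / k) * γ (m3 S T q x y))))) :
    (PCset S (fun x => (1 - k) • q + k • T x) P).Subsingleton := by
  rintro _ ⟨x, hx, rfl, hTx⟩ _ ⟨y, hy, rfl, hTy⟩
  by_contra hne
  have hD : 0 < ‖S x - S y‖ := norm_pos_iff.2 (sub_ne_zero.2 hne)
  have hm3 : m3 S T q x y = ‖S x - S y‖ :=
    (m3_le_of_mem_segment (mem_segment_of_eq_combo (Ioo_subset_Icc_self hk) hTx)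
      (mem_segment_of_eq_combo (Ioo_subset_Icc_self hk) hTy)).antisymm norm_sub_le_m3
  have hTxy : S x - S y = k • (T x - T y) := by
    rw [← hTx, ← hTy]
    module
  have hcxy := hcontr x hx y hy
  rw [hm3] at hcxy
  have hlt := lt_of_le_cclass hphi hψ hφu hF (mul_pos (one_div_pos.2 hk.1) (hγ.1 _ hD)) hcxy
  rw [one_div, lt_inv_mul_iff₀ hk.1, ← Real.norm_of_nonneg hk.1.le, ← norm_smul, ← hTxy] at hlt
  exact (hγ.2.2 _ hD).not_gt hlt

lemma exists_approxFixed_seq (hPb : Bornology.IsBounded P) (hq : q ∈ P) {n : ℕ} (hn : n ≠ 0)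
    (hJH : GenJHSubOp S T P q n)
    (hPC : ∀ k ∈ Ioo (0:ℝ) 1, (PCset S (fun x => (1 - k) • q + k • T x) P).Subsingleton) :
    ∃ x : ℕ → X, (∀ i, x i ∈ P ∧ S (x i) = x i ∧ x i ∈ segment ℝ q (T (x i))) ∧
      Tendsto (fun i => ‖x i - T (x i)‖) atTop (𝓝 0) := by
  obtain ⟨k, -, hk, hk1⟩ := exists_seq_strictMono_tendsto' (zero_lt_one' ℝ)
  have hfix i := (hJH (k i) (Ioo_subset_Icc_self (hk i))).exists_fixedPoint_of_subsingleton hn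
    (hPC (k i) (hk i))
  choose x hxP hSx hTx using hfix
  obtain ⟨C, hC⟩ := Metric.isBounded_iff.1 hPb
  refine ⟨x, fun i => ⟨hxP i, hSx i, mem_segment_of_eq_combo (Ioo_subset_Icc_self (hk i))
    (hTx i)⟩, squeeze_zero (fun i => norm_nonneg _) (g := fun i => (1 - k i) / k i * C)
    (fun i => ?_) ?_⟩
  · have hnorm := norm_sub_eq_of_eq_combo (Ioo_subset_Icc_self (hk i)) (hTx i)
    have hqx : ‖q - x i‖ ≤ C := dist_eq_norm q (x i) ▸ hC hq (hxP i)
    rw [div_mul_eq_mul_div, le_div_iff₀ (hk i).1, mul_comm, hnorm]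
    exact mul_le_mul_of_nonneg_left hqx (by linarith [(hk i).2])
  · simpa using (((tendsto_const_nhds (x := (1:ℝ))).sub hk1).div hk1 one_ne_zero).mul_const C

lemma fixedPoint_of_tendsto_approxFixed (hphi : PhiAdmissible phi) (hψ : AlteringDistance ψ)
    (hφu : UltraAltering φu) (hF : CClassFun F) (hγ : GammaAdmissible γ) {a : X}
    (hSa : S a = a) {z : ℕ → X} (hz : ∀ i, S (z i) = z i ∧ z i ∈ segment ℝ q (T (z i)))
    (hza : Tendsto z atTop (𝓝 a)) (hzT : Tendsto (fun i => ‖z i - T (z i)‖) atTop (𝓝 0))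
    (hcontr : ∀ i, ∀ k ∈ Ioo (0:ℝ) 1, ψ (intPhi phi ‖T (z i) - T a‖) ≤
      F (ψ (intPhi phi ((1 / k) * γ (m3 S T q (z i) a))))
        (φu (intPhi phi ((1 / k) * γ (m3 S T q (z i) a))))) :
    T a = a := by
  by_contra hne
  set D := ‖a - T a‖
  have hD : 0 < D := norm_pos_iff.2 (sub_ne_zero.2 (Ne.symm hne))
  -- `γ D < D` leaves room for a `k < 1` with `γ D / k < D`.
  obtain ⟨k, hγk, hk1⟩ := exists_between ((div_lt_one hD).2 (hγ.2.2 D hD))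
  have hk : 0 < k := (div_pos (hγ.1 D hD) hD).trans hγk
  have hb : (1 / k) * γ D < D := by
    rw [one_div, inv_mul_lt_iff₀ hk]
    exact (div_lt_iff₀ hD).1 hγk
  have hTz : Tendsto (fun i => ‖T (z i) - T a‖) atTop (𝓝 D) :=
    ((hza.congr_dist (by simpa [dist_eq_norm] using hzT)).sub_const (T a)).norm
  obtain ⟨i, ⟨hzi, hzTi⟩, hTi⟩ := (((tendsto_iff_norm_sub_tendsto_zero.1 hza).eventually
    (gt_mem_nhds (half_pos hD))).and (hzT.eventually (gt_mem_nhds hD))).and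
    (hTz.eventually (lt_mem_nhds hb)) |>.exists
  have hza_ne : z i ≠ a := fun h => (h ▸ hzTi : ‖a - T a‖ < D).false
  have hm3pos : 0 < m3 S T q (z i) a := by
    refine lt_of_lt_of_le ?_ norm_sub_le_m3
    rwa [(hz i).1, hSa, norm_pos_iff, sub_ne_zero]
  have hm3 : m3 S T q (z i) a ≤ D := by
    refine m3_le_of_mem_segment_left (by rw [(hz i).1]; exact (hz i).2) ?_ ?_
    · simpa [hSa, dist_eq_norm] using Metric.infDist_le_dist_of_mem (x := S a)
        (right_mem_segment ℝ q (T a))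
    · rw [(hz i).1, hSa]; linarith
  have hlt := lt_of_le_cclass hphi hψ hφu hF (by have := hγ.1 _ hm3pos; positivity)
    (hcontr i k ⟨hk, hk1⟩)
  have hγm : (1 / k) * γ (m3 S T q (z i) a) ≤ (1 / k) * γ D :=
    mul_le_mul_of_nonneg_left (hγ.2.1 hm3pos hD hm3) (by positivity)
  linarith

end CommonFixedPoint

theorem stmt_15_general {X : Type*} [NormedAddCommGroup X] [NormedSpace ℝ X]
    (M : Set X) (S T : X → X) (u : X)
    (hPMcl : IsClosed (PMset M u))
    (q : X) (hstar : Starshaped (PMset M u) q)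
    (phi ψ φu : ℝ → ℝ) (F : ℝ → ℝ → ℝ)
    (hphi : PhiAdmissible phi) (hψ : AlteringDistance ψ) (hφu : UltraAltering φu)
    (hF : CClassFun F)
    (γ : ℝ → ℝ) (hγ : GammaAdmissible γ)
    (n₀ : ℕ) (hn₀ : 1 ≤ n₀) (hJH : GenJHSubOp S T (PMset M u) q n₀)
    (hcontr : ∀ x ∈ PMset M u ∪ {u}, ∀ y ∈ PMset M u ∪ {u},
      (y = u →
        ψ (intPhi phi ‖T x - T y‖) ≤
          F (ψ (intPhi phi ‖S x - S y‖)) (φu (intPhi phi ‖S x - S y‖))) ∧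
      (y ∈ PMset M u → ∀ k ∈ Ioo (0:ℝ) 1,
        ψ (intPhi phi ‖T x - T y‖) ≤
          F (ψ (intPhi phi ((1 / k) * γ (m3 S T q x y))))
            (φu (intPhi phi ((1 / k) * γ (m3 S T q x y))))))
    (hPMb : Bornology.IsBounded (PMset M u))
    (hTh : Hemicompact T (PMset M u)) (hScont : ContinuousOn S (PMset M u)) :
    ∃ x ∈ PMset M u, S x = x ∧ T x = x := by
  have hcontrP : ∀ x ∈ PMset M u, ∀ y ∈ PMset M u, ∀ k ∈ Ioo (0:ℝ) 1, _ :=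
    fun x hx y hy => (hcontr x (.inl hx) y (.inl hy)).2 hy
  obtain ⟨x, hx, hxT⟩ := exists_approxFixed_seq hPMb hstar.1 (by omega) hJH
    fun k hk => subsingleton_pcset_of_contraction hphi hψ hφu hF hγ hk
      fun x hx y hy => hcontrP x hx y hy k hk
  obtain ⟨a, g, hg, hxa⟩ := hTh x (fun i => (hx i).1) hxT
  have haP : a ∈ PMset M u := hPMcl.mem_of_tendsto hxa (.of_forall fun i => (hx (g i)).1)
  have hSa : S a = a := tendsto_nhds_unique
    ((hScont a haP).tendsto.comp
      (tendsto_nhdsWithin_iff.2 ⟨hxa, .of_forall fun i => (hx (g i)).1⟩))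
    (by simpa [Function.comp_def, (hx _).2.1] using hxa)
  exact ⟨a, haP, hSa, fixedPoint_of_tendsto_approxFixed hphi hψ hφu hF hγ hSa
    (fun i => (hx (g i)).2) hxa (hxT.comp hg.tendsto_atTop)
    fun i => hcontrP (x (g i)) (hx (g i)).1 a haP⟩

theorem stmt_15 {X : Type*} [NormedAddCommGroup X] [NormedSpace ℝ X]
    (M : Set X) (S T : X → X) (u : X) (hSu : S u = u) (hTu : T u = u)
    (hTbd : T '' (frontier M ∩ M) ⊆ M)
    (hSPM : S '' PMset M u = PMset M u)
    (hPMcl : IsClosed (PMset M u))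
    (q : X) (hstar : Starshaped (PMset M u) q) (hq : S q = q)
    (phi ψ φu : ℝ → ℝ) (F : ℝ → ℝ → ℝ)
    (hphi : PhiAdmissible phi) (hψ : AlteringDistance ψ) (hφu : UltraAltering φu)
    (hF : CClassFun F) (hmono : MonotoneTriple ψ φu F)
    (γ : ℝ → ℝ) (hγ : GammaAdmissible γ)
    (n₀ : ℕ) (hn₀ : 1 ≤ n₀) (hJH : GenJHSubOp S T (PMset M u) q n₀)
    (hcontr : ∀ x ∈ PMset M u ∪ {u}, ∀ y ∈ PMset M u ∪ {u},
      (y = u →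
        ψ (intPhi phi ‖T x - T y‖) ≤
          F (ψ (intPhi phi ‖S x - S y‖)) (φu (intPhi phi ‖S x - S y‖))) ∧
      (y ∈ PMset M u → ∀ k ∈ Ioo (0:ℝ) 1,
        ψ (intPhi phi ‖T x - T y‖) ≤
          F (ψ (intPhi phi ((1 / k) * γ (m3 S T q x y))))
            (φu (intPhi phi ((1 / k) * γ (m3 S T q x y))))))
    (hPMb : Bornology.IsBounded (PMset M u)) (hPMc : IsComplete (PMset M u))
    (hTh : Hemicompact T (PMset M u)) (hScont : ContinuousOn S (PMset M u)) :
    ∃ x ∈ PMset M u, S x = x ∧ T x = x :=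
  stmt_15_general M S T u hPMcl q hstar phi ψ φu F hphi hψ hφu hF γ hγ n₀ hn₀ hJH hcontr hPMb hTh
    hScont
end
end

section
/- Let M be a subset of a real normed space X and S, T : X → X self-mappings such that u ∈ Fix(S) ∩ Fix(T) for some u ∈ X and T(∂M ∩ M) ⊆ M. Assume S(P_M(u)) = P_M(u), P_M(u) is closed and has a contractive jointly continuous family ℑ = {f_x : x ∈ P_M(u)} with contractiveness function Φ : (0,1) → (0,1), the pair (S,T) is a generalized JHℑ-suboperator pair with order n₀ on P_M(u), and for all x, y ∈ P_M(u) ∪ {u}: if y = u then ψ(∫₀^{‖Tx−Ty‖} φ(s)ds) ≤ F(ψ(∫₀^{‖Sx−Sy‖} φ(s)ds), φᵤ(∫₀^{‖Sx−Sy‖} φ(s)ds)), and if y ∈ P_M(u) then for each t ∈ (0,1), ψ(∫₀^{‖Tx−Ty‖} φ(s)ds) ≤ F(ψ(∫₀^{(1/Φ(t))γ(m₄(x,y))} φ(s)ds), φᵤ(∫₀^{(1/Φ(t))γ(m₄(x,y))} φ(s)ds)), where ψ is an altering distance function, φᵤ is an ultra altering distance function, F is a C-class function, and the triple (ψ, φᵤ,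 F) is monotone. Then P_M(u) is T-invariant; moreover, if cl(T(P_M(u))) is compact and S and T are continuous on P_M(u), then P_M(u) ∩ Fix(S) ∩ Fix(T) ≠ ∅. -/
open MeasureTheory Filter Topology Set

noncomputable section

variable {X : Type*} [NormedAddCommGroup X] [NormedSpace ℝ X]

/-
The contractive conditions force `‖T x - T y‖` to be at most the corresponding argument on the
right: otherwise monotonicity of the triple gives `F(ψ a, φᵤ a) = ψ a` with
`a = ∫₀^{‖Tx - Ty‖} φ > 0`, which a C-class function forbids. At `y = u` this puts `T x` no
farther from `u` than `S x ∈ P_M(u)`; a best approximation `x ≠ u` lies on `∂M`, so `T x ∈ M`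
and hence `T x ∈ P_M(u)`. For `k ∈ (0,1)` the condition with `y ∈ P_M(u)` leaves `S` and `T_k`
at most one point of coincidence, so the JHℑ-condition (with diameter `0`) yields `x_k` with
`S x_k = x_k = T_k x_k`. Along `kₙ → 1`, compactness gives `T x_{kₙ} → y` on a subsequence,
joint continuity gives `x_{kₙ} = f_{T x_{kₙ}}(kₙ) → f_y(1) = y`, and continuity of `S` and `T`
makes `y` a common fixed point.
-/

lemma eq_zero_of_le_cclass {ψ φu : ℝ → ℝ} {F : ℝ → ℝ → ℝ} (hψ : AlteringDistance ψ)
    (hφu : UltraAltering φu) (hF : CClassFun F) (hmono : MonotoneTriple ψ φu F) {a b : ℝ}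
    (hb : 0 ≤ b) (hba : b ≤ a) (h : ψ a ≤ F (ψ b) (φu b)) : a = 0 := by
  have ha : 0 ≤ a := hb.trans hba
  have hψa : 0 ≤ ψ a := by
    simpa [(hψ.2.2 0 le_rfl).mpr rfl] using hψ.1 self_mem_Ici (mem_Ici.mpr ha) ha
  have hφua : 0 ≤ φu a := hφu.2.2.2.trans (hφu.2.1 self_mem_Ici (mem_Ici.mpr ha) ha)
  have hFa : F (ψ a) (φu a) = ψ a :=
    le_antisymm (hF.2.1 _ hψa _ hφua) (h.trans (hmono b a hb hba))
  rcases hF.2.2 _ hψa _ hφua hFa with hψ0 | hφu0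
  · exact (hψ.2.2 a ha).mp hψ0
  · by_contra hne
    exact (hφu.2.2.1 a (lt_of_le_of_ne ha (Ne.symm hne))).ne' hφu0

namespace PhiAdmissible

lemma intPhi_mono {phi : ℝ → ℝ} (hphi : PhiAdmissible phi) {a b : ℝ} (ha : 0 ≤ a)
    (hab : a ≤ b) : intPhi phi a ≤ intPhi phi b := by
  rw [intPhi, intPhi, ← intervalIntegral.integral_add_adjacent_intervals (hphi.2.1 a)
    ((hphi.2.1 a).symm.trans (hphi.2.1 b))]
  exact le_add_of_nonneg_right
    (intervalIntegral.integral_nonneg hab fun t ht => hphi.1 t (ha.trans ht.1))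

lemma le_of_le_cclass {phi : ℝ → ℝ} (hphi : PhiAdmissible phi) {ψ φu : ℝ → ℝ}
    {F : ℝ → ℝ → ℝ} (hψ : AlteringDistance ψ) (hφu : UltraAltering φu) (hF : CClassFun F)
    (hmono : MonotoneTriple ψ φu F) {a b : ℝ}
    (hb : 0 ≤ b) (h : ψ (intPhi phi a) ≤ F (ψ (intPhi phi b)) (φu (intPhi phi b))) :
    a ≤ b := by
  by_contra! hba
  have hIb : 0 ≤ intPhi phi b := by
    simpa [intPhi] using hphi.intPhi_mono le_rfl hb
  have hIa := eq_zero_of_le_cclass hψ hφu hF hmono hIb (hphi.intPhi_mono hb hba.le) h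
  exact (hphi.2.2 a (hb.trans_lt hba)).ne' hIa

end PhiAdmissible

section

variable {E : Type*} [NormedAddCommGroup E]

lemma mem_frontier_of_mem_PMset [NormedSpace ℝ E] {M : Set E} {u x : E} (hx : x ∈ PMset M u)
    (hxu : x ≠ u) : x ∈ frontier M := by
  refine ⟨subset_closure hx.1, fun hint => ?_⟩
  have hcont : ContinuousAt (AffineMap.lineMap x u : ℝ → E) 0 :=
    AffineMap.lineMap_continuous.continuousAt
  have hM : ∀ᶠ t in 𝓝 (0:ℝ), AffineMap.lineMap x u t ∈ M :=
    hcont.preimage_mem_nhds (by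
      rw [AffineMap.lineMap_apply_zero]; exact mem_interior_iff_mem_nhds.mp hint)
  have hnear : ∀ᶠ t in 𝓝[>] (0:ℝ), AffineMap.lineMap x u t ∈ M ∧ t < 1 :=
    nhdsWithin_le_nhds (hM.and (gt_mem_nhds one_pos))
  obtain ⟨t, ⟨hzM, ht1⟩, ht0⟩ := (hnear.and self_mem_nhdsWithin).exists
  have hdist : dist u (AffineMap.lineMap x u t) < dist x u := by
    rw [dist_right_lineMap, Real.norm_of_nonneg (by linarith)]
    have : 0 < dist x u := dist_pos.mpr hxu
    nlinarith [show (0:ℝ) < t from ht0]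
  have hinf : Metric.infDist u M = dist x u := by rw [dist_eq_norm, hx.2]
  exact (Metric.infDist_le_dist_of_mem hzM).not_gt (hinf ▸ hdist)

lemma mapsTo_PMset [NormedSpace ℝ E] {M : Set E} {S T : E → E} {u : E} (hTu : T u = u)
    (hTbd : T '' (frontier M ∩ M) ⊆ M) (hS : MapsTo S (PMset M u) (PMset M u))
    (hTS : ∀ x ∈ PMset M u, ‖T x - u‖ ≤ ‖S x - u‖) : MapsTo T (PMset M u) (PMset M u) := by
  intro x hx
  rcases eq_or_ne x u with rfl | hxu
  · rwa [hTu]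
  have hTxM : T x ∈ M := hTbd ⟨x, ⟨mem_frontier_of_mem_PMset hx hxu, hx.1⟩, rfl⟩
  refine ⟨hTxM, le_antisymm ((hTS x hx).trans (hS hx).2.le) ?_⟩
  simpa [dist_eq_norm, norm_sub_rev] using Metric.infDist_le_dist_of_mem (x := u) hTxM

lemma m4_eq_of_mem_Yfam {f : E → ℝ → E} {S T : E → E} {x y : E}
    (hx : S x ∈ Yfam f (T x)) (hy : S y ∈ Yfam f (T y)) : m4 f S T x y = ‖S x - S y‖ := by
  have hxy : Metric.infDist (S x) (Yfam f (T y)) ≤ ‖S x - S y‖ := by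
    simpa [dist_eq_norm] using Metric.infDist_le_dist_of_mem (x := S x) hy
  have hyx : Metric.infDist (S y) (Yfam f (T x)) ≤ ‖S x - S y‖ := by
    simpa [dist_eq_norm, norm_sub_rev] using Metric.infDist_le_dist_of_mem (x := S y) hx
  rw [m4, Metric.infDist_zero_of_mem hx, Metric.infDist_zero_of_mem hy]
  have := norm_nonneg (S x - S y)
  exact le_antisymm (by simp only [max_le_iff]; constructor <;> constructor <;> linarith)
    ((le_max_left _ _).trans (le_max_left _ _))

lemma PCset_subsingleton {f : E → ℝ → E} {S T : E → E} {N : Set E} {Phi γ : ℝ → ℝ}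
    (hγ : GammaAdmissible γ) (hcf : ContractiveFamily f N Phi) (hT : MapsTo T N N)
    (hTS : ∀ x ∈ N, ∀ y ∈ N, 0 < m4 f S T x y → ∀ t ∈ Ioo (0:ℝ) 1,
      ‖T x - T y‖ ≤ (1 / Phi t) * γ (m4 f S T x y))
    {k : ℝ} (hk : k ∈ Ioo (0:ℝ) 1) : (PCset S (fun x => f (T x) k) N).Subsingleton := by
  rintro _ ⟨x, hx, rfl, hfx⟩ _ ⟨y, hy, rfl, hfy⟩
  by_contra hne
  have hkIcc : k ∈ Icc (0:ℝ) 1 := Ioo_subset_Icc_self hk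
  have hm4 : m4 f S T x y = ‖S x - S y‖ :=
    m4_eq_of_mem_Yfam ⟨k, hkIcc, hfx⟩ ⟨k, hkIcc, hfy⟩
  have hr : 0 < ‖S x - S y‖ := norm_pos_iff.mpr (sub_ne_zero_of_ne hne)
  have hPhi : 0 < Phi k := (hcf.1 k hk).1
  have hTxy := hTS x hx y hy (hm4 ▸ hr) k hk
  rw [hm4, one_div_mul_eq_div, le_div_iff₀ hPhi] at hTxy
  have hle_γ := calc ‖S x - S y‖ = ‖f (T x) k - f (T y) k‖ := by rw [← hfx, ← hfy]
    _ ≤ Phi k * ‖T x - T y‖ := hcf.2 _ (hT hx) _ (hT hy) k hk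
    _ ≤ γ ‖S x - S y‖ := by linarith
  exact (hγ.2.2 _ hr).not_ge hle_γ

lemma GenJHOp.exists_common_fixed {S T : E → E} {N : Set E} {n : ℕ} (h : GenJHOp S T N n)
    (hn : n ≠ 0) (hPC : (PCset S T N).Subsingleton) : ∃ x ∈ N, S x = x ∧ T x = x := by
  obtain ⟨x, hx, hST, hdist⟩ := h
  rw [Metric.diam_subsingleton hPC, zero_pow hn, norm_le_zero_iff, sub_eq_zero] at hdist
  exact ⟨x, hx, hdist, hST ▸ hdist⟩

lemma exists_common_fixed_of_approx {f : E → ℝ → E} {S T : E → E} {N : Set E}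
    (hN : IsClosed N) (hT : MapsTo T N N) (hcmp : IsCompact (closure (T '' N)))
    (hS : ContinuousOn S N) (hTc : ContinuousOn T N)
    (hjc : JointlyContinuousFamily f N) (hf1 : ∀ a ∈ N, f a 1 = a)
    (happrox : ∀ k ∈ Ioo (0:ℝ) 1, ∃ x ∈ N, S x = x ∧ f (T x) k = x) :
    ∃ y ∈ N, S y = y ∧ T y = y := by
  obtain ⟨k, -, hk, hk1⟩ := exists_seq_strictMono_tendsto' (zero_lt_one' ℝ)
  choose x hxN hSx hfx using fun n => happrox (k n) (hk n)
  obtain ⟨y, hy, g, hg, hTxy⟩ := hcmp.tendsto_subseq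
    fun n => subset_closure (mem_image_of_mem T (hxN n))
  have hyN : y ∈ N := closure_minimal hT.image_subset hN hy
  have hxy : Tendsto (x ∘ g) atTop (𝓝 y) := by
    have hf := hjc (k ∘ g) 1 (fun n => Ioo_subset_Icc_self (hk (g n)))
      (right_mem_Icc.mpr zero_le_one) (hk1.comp hg.tendsto_atTop) (fun n => T (x (g n))) y
      (fun n => hT (hxN (g n))) hyN hTxy
    simpa [hfx, hf1 y hyN, Function.comp_def] using hf
  have hxyN : Tendsto (x ∘ g) atTop (𝓝[N] y) :=
    tendsto_nhdsWithin_iff.mpr ⟨hxy, Eventually.of_forall fun n => hxN (g n)⟩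
  refine ⟨y, hyN, tendsto_nhds_unique ((hS y hyN).tendsto.comp hxyN) ?_,
    tendsto_nhds_unique ((hTc y hyN).tendsto.comp hxyN) hTxy⟩
  simpa [Function.comp_def, hSx] using hxy

end

theorem stmt_18 {X : Type*} [NormedAddCommGroup X] [NormedSpace ℝ X]
    (M : Set X) (S T : X → X) (u : X) (hSu : S u = u) (hTu : T u = u)
    (hTbd : T '' (frontier M ∩ M) ⊆ M)
    (hSPM : S '' PMset M u = PMset M u)
    (hPMcl : IsClosed (PMset M u))
    (f : X → ℝ → X) (Phi : ℝ → ℝ)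
    (hfam : FamilyOn f (PMset M u)) (hcf : ContractiveFamily f (PMset M u) Phi)
    (hjc : JointlyContinuousFamily f (PMset M u))
    (phi ψ φu : ℝ → ℝ) (F : ℝ → ℝ → ℝ)
    (hphi : PhiAdmissible phi) (hψ : AlteringDistance ψ) (hφu : UltraAltering φu)
    (hF : CClassFun F) (hmono : MonotoneTriple ψ φu F)
    (γ : ℝ → ℝ) (hγ : GammaAdmissible γ)
    (n₀ : ℕ) (hn₀ : 1 ≤ n₀) (hJH : GenJHImSubOp f S T (PMset M u) n₀)
    (hcontr : ∀ x ∈ PMset M u ∪ {u}, ∀ y ∈ PMset M u ∪ {u},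
      (y = u →
        ψ (intPhi phi ‖T x - T y‖) ≤
          F (ψ (intPhi phi ‖S x - S y‖)) (φu (intPhi phi ‖S x - S y‖))) ∧
      (y ∈ PMset M u → ∀ t ∈ Ioo (0:ℝ) 1,
        ψ (intPhi phi ‖T x - T y‖) ≤
          F (ψ (intPhi phi ((1 / Phi t) * γ (m4 f S T x y))))
            (φu (intPhi phi ((1 / Phi t) * γ (m4 f S T x y))))))
    (hcmp : IsCompact (closure (T '' PMset M u)))
    (hScont : ContinuousOn S (PMset M u)) (hTcont : ContinuousOn T (PMset M u)) :
    MapsTo T (PMset M u) (PMset M u) ∧ ∃ x ∈ PMset M u, S x = x ∧ T x = x := by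
  have hS : MapsTo S (PMset M u) (PMset M u) := fun x hx => hSPM ▸ mem_image_of_mem S hx
  have hT : MapsTo T (PMset M u) (PMset M u) := by
    refine mapsTo_PMset hTu hTbd hS fun x hx => ?_
    have hxu := (hcontr x (.inl hx) u (.inr rfl)).1 rfl
    rw [hTu, hSu] at hxu
    exact hphi.le_of_le_cclass hψ hφu hF hmono (norm_nonneg _) hxu
  refine ⟨hT, exists_common_fixed_of_approx hPMcl hT hcmp hScont hTcont hjc hfam.2
    fun k hk => (hJH k (Ioo_subset_Icc_self hk)).exists_common_fixed (by omega) ?_⟩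
  refine PCset_subsingleton hγ hcf hT (fun x hx y hy hm4 t ht => ?_) hk
  have hb : 0 < (1 / Phi t) * γ (m4 f S T x y) :=
    mul_pos (one_div_pos.mpr (hcf.1 t ht).1) (hγ.1 _ hm4)
  exact hphi.le_of_le_cclass hψ hφu hF hmono hb.le
    ((hcontr x (.inl hx) y (.inl hy)).2 hy t ht)

end
end
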